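/- arXiv:math-ph/0604044 — 3 statements merged into one kernel-verified Lean document; each statement's English description precedes it below -/
import Mathlib

section
/- Let F be a continuous function on the closed strip S = {z ∈ ℂ : 0 ≤ Im z ≤ 1}, analytic on the interior of S, satisfying a polynomial growth bound |F(t+is)| ≤ C(1+|t|)^N for all t ∈ ℝ, s ∈ (0,1), and the boundary relation F(t+i) = λ F(t) for all t ∈ ℝ, where λ ∈ ℂ with |λ| = 1. Then F is identically zero if λ ≠ 1, and F is constant if λ = 1. -/
open Complex Set Metric intervalIntegral Asymptotics Filter Bornology MeasureTheory

noncomputable section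


/-- Morera-type removability across a horizontal line. -/
lemma morera_line {f : ℂ → ℂ} {a : ℝ} (hc : Continuous f)
    (hd : ∀ z : ℂ, a - 1 < z.im → z.im < a + 1 → z.im ≠ a → DifferentiableAt ℂ f z) :
    ∀ z : ℂ, z.im = a → DifferentiableAt ℂ f z := by
  set U : Set ℂ := Complex.im ⁻¹' Ioo (a - 1) (a + 1) with hU
  have hUopen : IsOpen U := isOpen_Ioo.preimage Complex.continuous_im
  set H : ℂ → ℂ := fun z =>
    (∫ u in (0:ℝ)..z.re, f (u + a * I)) + I * ∫ v in a..z.im, f (z.re + v * I) with hH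
  have hch : ∀ b : ℝ, Continuous fun u : ℝ => f (↑u + ↑b * I) := by
    intro b; exact hc.comp (by continuity)
  have hcv : ∀ b : ℝ, Continuous fun v : ℝ => f (↑b + ↑v * I) := by
    intro b; exact hc.comp (by continuity)
  have key : ∀ z w : ℂ, z ∈ U → w ∈ U →
      H w - H z = (∫ u in z.re..w.re, f (↑u + ↑z.im * I))
        + I * ∫ v in z.im..w.im, f (↑w.re + ↑v * I) := by
    intro z w hz hw
    have hz' : a - 1 < z.im ∧ z.im < a + 1 := hz
    have hw' : a - 1 < w.im ∧ w.im < a + 1 := hw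
    have hrect := Complex.integral_boundary_rect_eq_zero_of_differentiable_on_off_countable f
      (↑z.re + ↑a * I) (↑w.re + ↑z.im * I) ∅ countable_empty (hc.continuousOn) ?_
    · simp only [add_re, ofReal_re, mul_re, I_re, mul_zero, ofReal_im, I_im, mul_one, zero_sub,
        add_im, mul_im, zero_mul, add_zero, zero_add, neg_zero, sub_zero, smul_eq_mul] at hrect
      have hs1 : (∫ u in (0:ℝ)..w.re, f (↑u + ↑a * I))
          = (∫ u in (0:ℝ)..z.re, f (↑u + ↑a * I)) + ∫ u in z.re..w.re, f (↑u + ↑a * I) :=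
        (integral_add_adjacent_intervals ((hch a).intervalIntegrable _ _)
          ((hch a).intervalIntegrable _ _)).symm
      have hs2 : (∫ v in a..w.im, f (↑w.re + ↑v * I))
          = (∫ v in a..z.im, f (↑w.re + ↑v * I)) + ∫ v in z.im..w.im, f (↑w.re + ↑v * I) :=
        (integral_add_adjacent_intervals ((hcv w.re).intervalIntegrable _ _)
          ((hcv w.re).intervalIntegrable _ _)).symm
      simp only [hH]
      linear_combination hs1 + I * hs2 + hrect
    · rintro p ⟨hp, -⟩
      rw [mem_reProdIm] at hp
      simp only [add_re, ofReal_re, mul_re, I_re, mul_zero, ofReal_im, I_im, mul_one, zero_sub,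
        add_im, mul_im, zero_mul, add_zero, zero_add, neg_zero, sub_zero] at hp
      obtain ⟨-, hp2⟩ := hp
      have hp21 := hp2.1
      have hp22 := hp2.2
      refine hd p ?_ ?_ ?_
      · have h1 : a - 1 < min a z.im := lt_min (by linarith) hz'.1
        linarith
      · have h2 : max a z.im < a + 1 := max_lt (by linarith) hz'.2
        linarith
      · intro h
        rw [h] at hp21 hp22
        rcases min_lt_iff.1 hp21 with h' | h' <;> rcases lt_max_iff.1 hp22 with h'' | h'' <;>
          linarith
  have hderiv : ∀ z ∈ U, HasDerivAt H (f z) z := by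
    intro z hz
    rw [hasDerivAt_iff_isLittleO, isLittleO_iff]
    intro c hc0
    obtain ⟨δ₁, hδ₁pos, hδ₁⟩ := Metric.continuousAt_iff.1 hc.continuousAt (c / 2) (by positivity)
    obtain ⟨δ₂, hδ₂pos, hδ₂⟩ := Metric.isOpen_iff.1 hUopen z hz
    set δ : ℝ := min (δ₁ / 2) δ₂ with hδ
    have hδpos : 0 < δ := lt_min (by positivity) hδ₂pos
    filter_upwards [Metric.ball_mem_nhds z hδpos] with w hwb
    have hwU : w ∈ U := hδ₂ (Metric.ball_subset_ball (min_le_right _ _) hwb)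
    have hdist : dist w z < δ := mem_ball.1 hwb
    have hkey := key z w hz hwU
    have i1 : IntervalIntegrable (fun u : ℝ => f (↑u + ↑z.im * I)) volume z.re w.re :=
      (hch z.im).intervalIntegrable _ _
    have i2 : IntervalIntegrable (fun v : ℝ => f (↑w.re + ↑v * I)) volume z.im w.im :=
      (hcv w.re).intervalIntegrable _ _
    have e1 : (∫ u in z.re..w.re, (f (↑u + ↑z.im * I) - f z))
        = (∫ u in z.re..w.re, f (↑u + ↑z.im * I)) - (w.re - z.re) • f z := by
      rw [integral_sub i1 intervalIntegrable_const, intervalIntegral.integral_const]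
    have e2 : (∫ v in z.im..w.im, (f (↑w.re + ↑v * I) - f z))
        = (∫ v in z.im..w.im, f (↑w.re + ↑v * I)) - (w.im - z.im) • f z := by
      rw [integral_sub i2 intervalIntegrable_const, intervalIntegral.integral_const]
    have habs_re : |w.re - z.re| ≤ ‖w - z‖ := by
      have := Complex.abs_re_le_norm (w - z)
      simpa [Complex.sub_re] using this
    have habs_im : |w.im - z.im| ≤ ‖w - z‖ := by
      have := Complex.abs_im_le_norm (w - z)
      simpa [Complex.sub_im] using this
    have hnd : ‖w - z‖ < δ := by rwa [← dist_eq_norm]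
    have b1 : ‖∫ u in z.re..w.re, (f (↑u + ↑z.im * I) - f z)‖ ≤ (c / 2) * |w.re - z.re| := by
      apply intervalIntegral.norm_integral_le_of_norm_le_const
      intro u hu
      have hu' : |u - z.re| ≤ |w.re - z.re| := by
        rcases Set.mem_uIoc.1 hu with ⟨h1, h2⟩ | ⟨h1, h2⟩ <;>
          rw [abs_sub_le_iff] <;> constructor <;>
          · first
            | linarith [le_abs_self (w.re - z.re), neg_abs_le (w.re - z.re)]
      have hdd : dist (↑u + ↑z.im * I : ℂ) z < δ₁ := by
        have : (↑u + ↑z.im * I : ℂ) - z = ((u - z.re : ℝ) : ℂ) := by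
          apply Complex.ext <;> simp
        rw [Complex.dist_eq, this]
        rw [Complex.norm_real, Real.norm_eq_abs]
        calc |u - z.re| ≤ |w.re - z.re| := hu'
          _ ≤ ‖w - z‖ := habs_re
          _ < δ := hnd
          _ ≤ δ₁ / 2 := min_le_left _ _
          _ < δ₁ := by linarith
      have := hδ₁ hdd
      rw [dist_eq_norm] at this
      exact this.le
    have b2 : ‖∫ v in z.im..w.im, (f (↑w.re + ↑v * I) - f z)‖ ≤ (c / 2) * |w.im - z.im| := by
      apply intervalIntegral.norm_integral_le_of_norm_le_const
      intro v hv
      have hv' : |v - z.im| ≤ |w.im - z.im| := by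
        rcases Set.mem_uIoc.1 hv with ⟨h1, h2⟩ | ⟨h1, h2⟩ <;>
          rw [abs_sub_le_iff] <;> constructor <;>
          · first
            | linarith [le_abs_self (w.im - z.im), neg_abs_le (w.im - z.im)]
      have hdd : dist (↑w.re + ↑v * I : ℂ) z < δ₁ := by
        have heq : (↑w.re + ↑v * I : ℂ) - z = ((w.re - z.re : ℝ) : ℂ) + ((v - z.im : ℝ) : ℂ) * I := by
          apply Complex.ext <;> simp
        rw [Complex.dist_eq, heq]
        calc ‖(((w.re - z.re : ℝ) : ℂ) + ((v - z.im : ℝ) : ℂ) * I)‖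
            ≤ ‖((w.re - z.re : ℝ) : ℂ)‖ + ‖(((v - z.im : ℝ) : ℂ) * I)‖ :=
              norm_add_le _ _
          _ = |w.re - z.re| + |v - z.im| := by
              rw [norm_mul, Complex.norm_I, mul_one, Complex.norm_real, Complex.norm_real,
                Real.norm_eq_abs, Real.norm_eq_abs]
          _ ≤ ‖w - z‖ + |w.im - z.im| := by gcongr
          _ ≤ ‖w - z‖ + ‖w - z‖ := by gcongr
          _ < δ + δ := by linarith
          _ ≤ δ₁ / 2 + δ₁ / 2 := by have := min_le_left (δ₁ / 2) δ₂; linarith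
          _ = δ₁ := by ring
      have := hδ₁ hdd
      rw [dist_eq_norm] at this
      exact this.le
    have hwz : w - z = ((w.re - z.re : ℝ) : ℂ) + ((w.im - z.im : ℝ) : ℂ) * I := by
      apply Complex.ext <;> simp
    have expand : H w - H z - (w - z) • f z
        = (∫ u in z.re..w.re, (f (↑u + ↑z.im * I) - f z))
          + I * (∫ v in z.im..w.im, (f (↑w.re + ↑v * I) - f z)) := by
      rw [e1, e2, hkey, smul_eq_mul, hwz]
      simp only [Complex.real_smul]
      push_cast
      ring
    rw [expand]
    calc ‖(∫ u in z.re..w.re, (f (↑u + ↑z.im * I) - f z))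
          + I * (∫ v in z.im..w.im, (f (↑w.re + ↑v * I) - f z))‖
        ≤ ‖∫ u in z.re..w.re, (f (↑u + ↑z.im * I) - f z)‖
          + ‖I * (∫ v in z.im..w.im, (f (↑w.re + ↑v * I) - f z))‖ := norm_add_le _ _
      _ = ‖∫ u in z.re..w.re, (f (↑u + ↑z.im * I) - f z)‖
          + ‖∫ v in z.im..w.im, (f (↑w.re + ↑v * I) - f z)‖ := by
          rw [norm_mul, Complex.norm_I, one_mul]
      _ ≤ (c / 2) * |w.re - z.re| + (c / 2) * |w.im - z.im| := add_le_add b1 b2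
      _ ≤ (c / 2) * ‖w - z‖ + (c / 2) * ‖w - z‖ := by gcongr
      _ = c * ‖w - z‖ := by ring
  intro z hza
  have hzU : z ∈ U := by
    simp only [hU, Set.mem_preimage, Set.mem_Ioo, hza]
    constructor <;> linarith
  have hHd : DifferentiableOn ℂ H U := fun w hw =>
    ((hderiv w hw).differentiableAt).differentiableWithinAt
  have hHa : AnalyticOnNhd ℂ H U := hHd.analyticOnNhd hUopen
  have hda : DifferentiableAt ℂ (deriv H) z := ((hHa.deriv z hzU)).differentiableAt
  refine hda.congr_of_eventuallyEq ?_
  filter_upwards [hUopen.mem_nhds hzU] with w hw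
  exact ((hderiv w hw).deriv).symm


lemma poly_liouville (lam : ℂ) :
    ∀ (N : ℕ) (C : ℝ) (G : ℂ → ℂ), Differentiable ℂ G →
    (∀ z, ‖G z‖ ≤ C * (1 + ‖z‖) ^ N) →
    (∀ z, G (z + I) = lam * G z) →
    (lam ≠ 1 → ∀ z, G z = 0) ∧ (lam = 1 → ∀ z w : ℂ, G z = G w) := by
  intro N
  induction N with
  | zero =>
    intro C G hG hbd hfe
    have hconst : ∀ z w : ℂ, G z = G w := by
      intro z w
      apply hG.apply_eq_apply_of_bounded
      rw [isBounded_iff_forall_norm_le]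
      refine ⟨C, ?_⟩
      rintro y ⟨x, rfl⟩
      simpa using hbd x
    have h0 : G 0 = lam * G 0 := by
      have := hfe 0
      rwa [zero_add, hconst I 0] at this
    refine ⟨fun hne z => ?_, fun _ => hconst⟩
    have h1 : (1 - lam) * G 0 = 0 := by linear_combination h0
    rcases mul_eq_zero.1 h1 with h | h
    · exact absurd (sub_eq_zero.1 h).symm hne
    · rw [hconst z 0, h]
  | succ N ih =>
    intro C G hG hbd hfe
    have hC0 : 0 ≤ C := by
      have h1 : (0 : ℝ) ≤ ‖G 0‖ := norm_nonneg _
      have h2 := hbd 0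
      simp only [norm_zero, add_zero, one_pow, mul_one] at h2
      linarith
    have hGa : AnalyticOnNhd ℂ G univ := hG.differentiableOn.analyticOnNhd isOpen_univ
    have hG' : Differentiable ℂ (deriv G) := fun z => (hGa.deriv z (mem_univ z)).differentiableAt
    have hbd' : ∀ z, ‖deriv G z‖ ≤ (2 ^ (N + 1) * C) * (1 + ‖z‖) ^ N := by
      intro z
      set R : ℝ := 1 + ‖z‖ with hR
      have hRpos : 0 < R := by positivity
      have hb : ∀ w ∈ sphere z R, ‖G w‖ ≤ C * (2 * R) ^ (N + 1) := by
        intro w hw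
        have hww : ‖w - z‖ = R := by
          rw [mem_sphere, Complex.dist_eq] at hw; exact hw
        have habs : ‖w‖ ≤ ‖z‖ + R := by
          calc ‖w‖ = ‖z + (w - z)‖ := by ring_nf
            _ ≤ ‖z‖ + ‖w - z‖ := norm_add_le _ _
            _ = ‖z‖ + R := by rw [hww]
        calc ‖G w‖ ≤ C * (1 + ‖w‖) ^ (N + 1) := hbd w
          _ ≤ C * (2 * R) ^ (N + 1) := by
              apply mul_le_mul_of_nonneg_left _ hC0
              apply pow_le_pow_left₀ (by positivity)
              rw [hR]; linarith
      have hest := Complex.norm_deriv_le_of_forall_mem_sphere_norm_le hRpos hG.diffContOnCl hb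
      calc ‖deriv G z‖ = ‖deriv G z‖ := rfl
        _ ≤ C * (2 * R) ^ (N + 1) / R := hest
        _ = (2 ^ (N + 1) * C) * R ^ N := by
            rw [mul_pow]
            rw [pow_succ R N]
            field_simp
        _ = (2 ^ (N + 1) * C) * (1 + ‖z‖) ^ N := by rw [hR]
    have hfe' : ∀ z, deriv G (z + I) = lam * deriv G z := by
      intro z
      have hcomp : HasDerivAt (fun w => G (w + I)) (deriv G (z + I)) z := by
        have := ((hG (z + I)).hasDerivAt).comp z ((hasDerivAt_id z).add_const I)
        simpa [Function.comp_def] using this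
      have hcomp2 : HasDerivAt (fun w => G (w + I)) (lam * deriv G z) z := by
        have h2 : (fun w : ℂ => G (w + I)) = fun w => lam * G w := funext hfe
        rw [h2]
        exact (hG z).hasDerivAt.const_mul lam
      exact hcomp.unique hcomp2
    obtain ⟨ih1, ih2⟩ := ih (2 ^ (N + 1) * C) (deriv G) hG' hbd' hfe'
    constructor
    · intro hne z
      have hconst : ∀ z w : ℂ, G z = G w :=
        fun z w => is_const_of_deriv_eq_zero hG (fun x => ih1 hne x) z w
      have h0 : G 0 = lam * G 0 := by
        have := hfe 0
        rwa [zero_add, hconst I 0] at this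
      have h1 : (1 - lam) * G 0 = 0 := by linear_combination h0
      rcases mul_eq_zero.1 h1 with h | h
      · exact absurd (sub_eq_zero.1 h).symm hne
      · rw [hconst z 0, h]
    · intro h1
      set a := deriv G 0 with ha
      have hdc : ∀ z, deriv G z = a := fun z => ih2 h1 z 0
      have hKd : Differentiable ℂ (fun z : ℂ => G z - a * z) :=
        hG.sub (differentiable_id.const_mul a)
      have hKd0 : ∀ z, deriv (fun z : ℂ => G z - a * z) z = 0 := by
        intro z
        have hz2 : DifferentiableAt ℂ (fun z : ℂ => a * z) z := differentiableAt_fun_id.const_mul a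
        rw [deriv_fun_sub (hG z) hz2]
        rw [deriv_const_mul a differentiableAt_fun_id, deriv_id'']
        rw [hdc z]; ring
      have hK : ∀ z w : ℂ, G z - a * z = G w - a * w :=
        fun z w => is_const_of_deriv_eq_zero hKd hKd0 z w
      have hI : G I = G 0 := by
        have := hfe 0
        rwa [zero_add, h1, one_mul] at this
      have haI : a * I = 0 := by
        have h2 := hK I 0
        rw [hI] at h2
        linear_combination -h2
      have ha0 : a = 0 := by
        rcases mul_eq_zero.1 haI with h | h
        · exact h
        · exact absurd h I_ne_zero
      intro z w
      have h2 := hK z w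
      rw [ha0] at h2
      simpa using h2

end


/-- The closed strip `ℝ + i[0,1]`. -/
def closedStrip : Set ℂ := {z : ℂ | 0 ≤ z.im ∧ z.im ≤ 1}

/-- The open strip `ℝ + i(0,1)`. -/
def openStrip : Set ℂ := {z : ℂ | 0 < z.im ∧ z.im < 1}

/-- A continuous function on the closed strip, analytic on the open strip, with polynomial
growth `|F(t+is)| ≤ C(1+|t|)^N` and boundary relation `F(t+i) = λ F(t)` for a phase `λ`
(`|λ| = 1`), is identically zero if `λ ≠ 1` and constant if `λ = 1`. -/
theorem strip_liouville (F : ℂ → ℂ) (lam : ℂ) (C : ℝ) (N : ℕ)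
    (hlam : ‖lam‖ = 1)
    (hcont : ContinuousOn F closedStrip)
    (hanal : DifferentiableOn ℂ F openStrip)
    (hgrowth : ∀ t s : ℝ, 0 < s → s < 1 →
      ‖F ((t : ℂ) + (s : ℂ) * Complex.I)‖ ≤ C * (1 + |t|) ^ N)
    (hbdry : ∀ t : ℝ, F ((t : ℂ) + Complex.I) = lam * F (t : ℂ)) :
    (lam ≠ 1 → ∀ z ∈ closedStrip, F z = 0) ∧
    (lam = 1 → ∀ z ∈ closedStrip, ∀ w ∈ closedStrip, F z = F w) := by
  classical
  have hlam0 : lam ≠ 0 := by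
    intro h; rw [h] at hlam; simp at hlam
  have hopenS : IsOpen openStrip := by
    have : openStrip = Complex.im ⁻¹' Set.Ioo (0 : ℝ) 1 := rfl
    rw [this]
    exact isOpen_Ioo.preimage Complex.continuous_im
  -- the extension
  set G : ℂ → ℂ := fun z => lam ^ (⌊z.im⌋ : ℤ) * F (z - (⌊z.im⌋ : ℂ) * I) with hGdef
  have him : ∀ (n : ℤ) (z : ℂ), (z - (n : ℂ) * I).im = z.im - n := by
    intro n z; simp
  have hmem : ∀ (n : ℤ) (z : ℂ), (n : ℝ) ≤ z.im → z.im ≤ (n : ℝ) + 1 →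
      z - (n : ℂ) * I ∈ closedStrip := by
    intro n z h1 h2
    refine ⟨?_, ?_⟩ <;> rw [him] <;> linarith
  have hGeq : ∀ (n : ℤ) (z : ℂ), (n : ℝ) ≤ z.im → z.im ≤ (n : ℝ) + 1 →
      G z = lam ^ n * F (z - (n : ℂ) * I) := by
    intro n z h1 h2
    rcases eq_or_lt_of_le h2 with heq | hlt
    · have hfl : ⌊z.im⌋ = n + 1 := by
        rw [heq]
        rw [show ((n : ℝ) + 1) = ((n + 1 : ℤ) : ℝ) by push_cast; ring]
        exact Int.floor_intCast _
      have e1 : z - ((n + 1 : ℤ) : ℂ) * I = (z.re : ℂ) := by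
        apply Complex.ext <;> simp [heq] <;> push_cast <;> ring
      have e2 : z - (n : ℂ) * I = (z.re : ℂ) + I := by
        apply Complex.ext <;> simp [heq]
      rw [hGdef]
      simp only [hfl]
      push_cast
      rw [show z - ((n : ℂ) + 1) * I = z - ((n + 1 : ℤ) : ℂ) * I by push_cast; ring, e1, e2,
        hbdry z.re, zpow_add₀ hlam0, zpow_one]
      ring
    · have hfl : ⌊z.im⌋ = n := by
        apply Int.floor_eq_iff.2
        constructor
        · exact h1
        · push_cast; exact hlt
      rw [hGdef]
      simp only [hfl]
  have hFG : ∀ z ∈ closedStrip, G z = F z := by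
    intro z hz
    have := hGeq 0 z (by simpa using hz.1) (by simpa using hz.2)
    simpa using this
  -- growth on the closed strip
  have hC0 : 0 ≤ C := by
    have h1 : (0 : ℝ) ≤ ‖F ((0 : ℝ) + ((1 : ℝ) / 2 : ℝ) * I)‖ := norm_nonneg _
    have h2 := hgrowth 0 (1 / 2) (by norm_num) (by norm_num)
    simp only [abs_zero, add_zero, one_pow, mul_one] at h2
    linarith
  have hFbd : ∀ w ∈ closedStrip, ‖F w‖ ≤ C * (1 + |w.re|) ^ N := by
    intro w hw
    obtain ⟨h0, h1⟩ := hw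
    rcases eq_or_lt_of_le h0 with he0 | hgt0
    · -- im = 0
      have hw' : w = (w.re : ℂ) := by apply Complex.ext <;> simp [← he0]
      haveI : (nhdsWithin (0:ℝ) (Set.Ioi 0)).NeBot := nhdsGT_neBot 0
      have hIoo : Set.Ioo (0 : ℝ) 1 ∈ nhdsWithin (0:ℝ) (Set.Ioi 0) :=
        Ioo_mem_nhdsGT_of_mem ⟨le_refl 0, by norm_num⟩
      have hbase : Filter.Tendsto (fun s : ℝ => (w.re : ℂ) + (s : ℂ) * I)
          (nhdsWithin (0:ℝ) (Set.Ioi 0)) (nhds ((w.re : ℂ))) := by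
        have hcont2 : Continuous (fun s : ℝ => (w.re : ℂ) + (s : ℂ) * I) :=
          continuous_const.add (Complex.continuous_ofReal.mul continuous_const)
        have := (hcont2.tendsto 0).mono_left (nhdsWithin_le_nhds (s := Set.Ioi 0))
        simpa using this
      have hpath : Filter.Tendsto (fun s : ℝ => (w.re : ℂ) + (s : ℂ) * I)
          (nhdsWithin (0:ℝ) (Set.Ioi 0)) (nhdsWithin ((w.re : ℂ)) closedStrip) := by
        rw [tendsto_nhdsWithin_iff]
        refine ⟨hbase, ?_⟩
        filter_upwards [hIoo] with s hs
        exact ⟨by simpa using hs.1.le, by simpa using hs.2.le⟩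
      have hmemt : (w.re : ℂ) ∈ closedStrip := by
        constructor <;> simp
      have htend : Filter.Tendsto (fun s : ℝ => ‖F ((w.re : ℂ) + (s : ℂ) * I)‖)
          (nhdsWithin (0:ℝ) (Set.Ioi 0)) (nhds ‖F ((w.re : ℂ))‖) :=
        (continuous_norm.tendsto _).comp ((hcont _ hmemt).tendsto.comp hpath)
      have hle : ‖F ((w.re : ℂ))‖ ≤ C * (1 + |w.re|) ^ N := by
        refine le_of_tendsto htend ?_
        filter_upwards [hIoo] with s hs
        exact hgrowth w.re s hs.1 hs.2
      calc ‖F w‖ = ‖F ((w.re : ℂ))‖ := by rw [← hw']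
        _ ≤ C * (1 + |w.re|) ^ N := hle
    rcases eq_or_lt_of_le h1 with he1 | hlt1
    · -- im = 1
      have hw' : w = (w.re : ℂ) + I := by apply Complex.ext <;> simp [he1]
      haveI : (nhdsWithin (0:ℝ) (Set.Ioi 0)).NeBot := nhdsGT_neBot 0
      have hIoo : Set.Ioo (0 : ℝ) 1 ∈ nhdsWithin (0:ℝ) (Set.Ioi 0) :=
        Ioo_mem_nhdsGT_of_mem ⟨le_refl 0, by norm_num⟩
      have hbase : Filter.Tendsto (fun s : ℝ => (w.re : ℂ) + ((1 - s : ℝ) : ℂ) * I)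
          (nhdsWithin (0:ℝ) (Set.Ioi 0)) (nhds ((w.re : ℂ) + I)) := by
        have hcont2 : Continuous (fun s : ℝ => (w.re : ℂ) + ((1 - s : ℝ) : ℂ) * I) :=
          continuous_const.add ((Complex.continuous_ofReal.comp
            (continuous_const.sub continuous_id)).mul continuous_const)
        have := (hcont2.tendsto 0).mono_left (nhdsWithin_le_nhds (s := Set.Ioi 0))
        simpa using this
      have hpath : Filter.Tendsto (fun s : ℝ => (w.re : ℂ) + ((1 - s : ℝ) : ℂ) * I)
          (nhdsWithin (0:ℝ) (Set.Ioi 0)) (nhdsWithin ((w.re : ℂ) + I) closedStrip) := by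
        rw [tendsto_nhdsWithin_iff]
        refine ⟨hbase, ?_⟩
        filter_upwards [hIoo] with s hs
        constructor
        · simp only [Complex.add_im, Complex.ofReal_re, Complex.mul_im, Complex.ofReal_im,
            Complex.I_re, Complex.I_im]
          simp
          linarith [hs.2]
        · simp only [Complex.add_im, Complex.ofReal_re, Complex.mul_im, Complex.ofReal_im,
            Complex.I_re, Complex.I_im]
          simp
          linarith [hs.1]
      have hmemt : (w.re : ℂ) + I ∈ closedStrip := by
        constructor <;> simp
      have htend : Filter.Tendsto (fun s : ℝ => ‖F ((w.re : ℂ) + ((1 - s : ℝ) : ℂ) * I)‖)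
          (nhdsWithin (0:ℝ) (Set.Ioi 0)) (nhds ‖F ((w.re : ℂ) + I)‖) :=
        (continuous_norm.tendsto _).comp ((hcont _ hmemt).tendsto.comp hpath)
      have hle : ‖F ((w.re : ℂ) + I)‖ ≤ C * (1 + |w.re|) ^ N := by
        refine le_of_tendsto htend ?_
        filter_upwards [hIoo] with s hs
        exact hgrowth w.re (1 - s) (by linarith [hs.2]) (by linarith [hs.1])
      calc ‖F w‖ = ‖F ((w.re : ℂ) + I)‖ := by rw [← hw']
        _ ≤ C * (1 + |w.re|) ^ N := hle
    · have := hgrowth w.re w.im hgt0 hlt1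
      rwa [Complex.re_add_im] at this
  -- continuity of G
  have hstripcont : ∀ n : ℤ, ContinuousOn G (Complex.im ⁻¹' Set.Icc (n : ℝ) ((n : ℝ) + 1)) := by
    intro n
    have hmap : Set.MapsTo (fun w : ℂ => w - (n : ℂ) * I)
        (Complex.im ⁻¹' Set.Icc (n : ℝ) ((n : ℝ) + 1)) closedStrip :=
      fun w hw => hmem n w hw.1 hw.2
    have h1 : ContinuousOn (fun w : ℂ => lam ^ n * F (w - (n : ℂ) * I))
        (Complex.im ⁻¹' Set.Icc (n : ℝ) ((n : ℝ) + 1)) :=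
      continuousOn_const.mul (hcont.comp ((continuous_id.sub continuous_const).continuousOn) hmap)
    exact h1.congr (fun w hw => hGeq n w hw.1 hw.2)
  have hGcont : Continuous G := by
    rw [continuous_iff_continuousAt]
    intro z
    set n : ℤ := ⌊z.im⌋ with hn
    have h1 : (n : ℝ) ≤ z.im := Int.floor_le _
    have h2 : z.im < (n : ℝ) + 1 := Int.lt_floor_add_one _
    have cw2 : ContinuousWithinAt G (Complex.im ⁻¹' Set.Icc (n : ℝ) ((n : ℝ) + 1)) z :=
      (hstripcont n) z ⟨h1, h2.le⟩
    have cw1 : ContinuousWithinAt G (Complex.im ⁻¹' Set.Icc ((n - 1 : ℤ) : ℝ) (((n - 1 : ℤ) : ℝ) + 1)) z := by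
      by_cases hz : z.im = (n : ℝ)
      · exact (hstripcont (n - 1)) z ⟨by push_cast; linarith, by push_cast; linarith⟩
      · apply continuousWithinAt_of_notMem_closure
        rw [IsClosed.closure_eq (isClosed_Icc.preimage Complex.continuous_im)]
        intro hmem'
        have := hmem'.2
        push_cast at this
        have hgt : (n : ℝ) < z.im := lt_of_le_of_ne h1 (Ne.symm hz)
        linarith
    have hT : (Complex.im ⁻¹' Set.Icc ((n - 1 : ℤ) : ℝ) (((n - 1 : ℤ) : ℝ) + 1)) ∪
        (Complex.im ⁻¹' Set.Icc (n : ℝ) ((n : ℝ) + 1)) ∈ nhds z := by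
      have hsub : Complex.im ⁻¹' Set.Ioo ((n : ℝ) - 1) ((n : ℝ) + 1) ⊆
          (Complex.im ⁻¹' Set.Icc ((n - 1 : ℤ) : ℝ) (((n - 1 : ℤ) : ℝ) + 1)) ∪
          (Complex.im ⁻¹' Set.Icc (n : ℝ) ((n : ℝ) + 1)) := by
        intro w hw
        obtain ⟨hw1, hw2⟩ := hw
        rcases le_total w.im (n : ℝ) with h | h
        · left; constructor <;> push_cast <;> linarith
        · right; exact ⟨h, hw2.le⟩
      refine Filter.mem_of_superset ((isOpen_Ioo.preimage Complex.continuous_im).mem_nhds ?_) hsub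
      exact ⟨by linarith, h2⟩
    exact (cw1.union cw2).continuousAt hT
  -- differentiability away from integer lines
  have hdiff_nonint : ∀ z : ℂ, ((⌊z.im⌋ : ℝ) < z.im) → DifferentiableAt ℂ G z := by
    intro z hlt
    set n : ℤ := ⌊z.im⌋ with hn
    have h2 : z.im < (n : ℝ) + 1 := Int.lt_floor_add_one _
    have hVz : Complex.im ⁻¹' Set.Ioo ((n : ℝ)) ((n : ℝ) + 1) ∈ nhds z :=
      (isOpen_Ioo.preimage Complex.continuous_im).mem_nhds ⟨hlt, h2⟩
    have hgn : DifferentiableAt ℂ (fun w : ℂ => lam ^ n * F (w - (n : ℂ) * I)) z := by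
      have hmemo : z - (n : ℂ) * I ∈ openStrip := by
        constructor <;> rw [him] <;> linarith
      have hFat : DifferentiableAt ℂ F (z - (n : ℂ) * I) :=
        (hanal.differentiableAt (hopenS.mem_nhds hmemo))
      exact (hFat.comp z ((differentiableAt_fun_id.sub_const _))).const_mul _
    refine hgn.congr_of_eventuallyEq ?_
    filter_upwards [hVz] with w hw
    exact hGeq n w hw.1.le hw.2.le
  have hGdiff : Differentiable ℂ G := by
    intro z
    by_cases hint : (⌊z.im⌋ : ℝ) = z.im
    · refine morera_line (a := z.im) hGcont ?_ z rfl
      intro w hw1 hw2 hw3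
      apply hdiff_nonint
      by_contra hge
      push_neg at hge
      have heq : (⌊w.im⌋ : ℝ) = w.im := le_antisymm (Int.floor_le _) hge
      have hk : ⌊w.im⌋ = ⌊z.im⌋ := by
        have c1 : ((⌊z.im⌋ : ℝ)) - 1 < (⌊w.im⌋ : ℝ) := by rw [heq, hint]; linarith
        have c2 : ((⌊w.im⌋ : ℝ)) < (⌊z.im⌋ : ℝ) + 1 := by rw [heq, hint]; linarith
        have c1' : (⌊z.im⌋ : ℤ) - 1 < ⌊w.im⌋ := by exact_mod_cast (by push_cast; linarith : ((⌊z.im⌋ - 1 : ℤ) : ℝ) < (⌊w.im⌋ : ℝ))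
        have c2' : (⌊w.im⌋ : ℤ) < ⌊z.im⌋ + 1 := by exact_mod_cast (by push_cast; linarith : ((⌊w.im⌋ : ℤ) : ℝ) < ((⌊z.im⌋ + 1 : ℤ) : ℝ))
        omega
      exact hw3 (by rw [← heq, hk, hint])
    · exact hdiff_nonint z (lt_of_le_of_ne (Int.floor_le _) hint)
  -- functional equation for G
  have hGfe : ∀ z : ℂ, G (z + I) = lam * G z := by
    intro z
    set n : ℤ := ⌊z.im⌋ with hn
    have h1 : (n : ℝ) ≤ z.im := Int.floor_le _
    have h2 : z.im ≤ (n : ℝ) + 1 := (Int.lt_floor_add_one _).le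
    have e1 := hGeq n z h1 h2
    have e2 := hGeq (n + 1) (z + I) (by simp; push_cast; linarith) (by simp; push_cast; linarith)
    rw [e2, e1]
    rw [show z + I - ((n + 1 : ℤ) : ℂ) * I = z - (n : ℂ) * I by push_cast; ring]
    rw [zpow_add₀ hlam0, zpow_one]
    ring
  -- growth for G
  have hGgrowth : ∀ z : ℂ, ‖G z‖ ≤ C * (1 + ‖z‖) ^ N := by
    intro z
    set n : ℤ := ⌊z.im⌋ with hn
    rw [hGeq n z (Int.floor_le _) (Int.lt_floor_add_one _).le, norm_mul]
    have hab1 : ‖lam ^ n‖ = 1 := by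
      rw [norm_zpow, hlam, one_zpow]
    rw [hab1, one_mul]
    have hm := hmem n z (Int.floor_le _) (Int.lt_floor_add_one _).le
    have hbb := hFbd _ hm
    have hre : (z - (n : ℂ) * I).re = z.re := by simp
    rw [hre] at hbb
    refine hbb.trans ?_
    apply mul_le_mul_of_nonneg_left _ hC0
    apply pow_le_pow_left₀ (by positivity)
    linarith [Complex.abs_re_le_norm z]
  obtain ⟨P1, P2⟩ := poly_liouville lam N C G hGdiff hGgrowth hGfe
  constructor
  · intro hne z hz
    rw [← hFG z hz]
    exact P1 hne z
  · intro h1 z hz w hw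
    rw [← hFG z hz, ← hFG w hw]
    exact P2 h1 z w
end

section
/- Let 𝒜 be a simple C*-algebra acting on a Hilbert space, let U(t) = exp(itA) for a self-adjoint operator A with U(t) implementing, by conjugation twisted by phases, the given unitaries generating 𝒜 (i.e., there exist unitaries u_g ∈ 𝒜 spanning a dense subspace such that U(t) u_g = e^{ic_g t} u_g U(t) for real constants c_g). Then the set J = {M ∈ 𝒜 : ‖(U(t) − 1)M‖ → 0 as t → 0} is a closed two-sided ideal of 𝒜, hence J = {0} or J = 𝒜. -/
open Filter Topology

/-!
Let `S` be the set of operators `T` with `‖(U t - 1) T‖ → 0`. It is a linear subspace, it is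
closed because the maps `T ↦ (U t - 1) T` are uniformly bounded, and it is stable under right
multiplication. The twisted commutation relation gives
`(U t - 1) u_g T = e^{i c_g t} u_g (U t - 1) T + (e^{i c_g t} - 1) u_g T`,
so `S` is stable under left multiplication by each `u_g`, hence by their dense span and then, by
closedness, by all of `𝒜`. Pulled back along `π`, `S` is a closed two-sided ideal, and simplicity
leaves only `{0}` and `𝒜`.
-/

section NormContinuity

variable {𝕜 E ι : Type*} [NormedField 𝕜] [NormedRing E] [NormedAlgebra 𝕜 E]

variable (𝕜) in
def normContinuitySubmodule (l : Filter ι) (U : ι → E) : Submodule 𝕜 E where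
  carrier := {T | Tendsto (fun t => (U t - 1) * T) l (𝓝 0)}
  zero_mem' := by simpa using tendsto_const_nhds
  add_mem' hS hT := by simpa [mul_add] using hS.add hT
  smul_mem' a T hT := by simpa using hT.const_smul a

variable {l : Filter ι} {U : ι → E}

theorem mem_normContinuitySubmodule {T : E} :
    T ∈ normContinuitySubmodule 𝕜 l U ↔ Tendsto (fun t => (U t - 1) * T) l (𝓝 0) :=
  Iff.rfl

theorem isClosed_normContinuitySubmodule {K : NNReal} (hU : ∀ t, ‖U t - 1‖₊ ≤ K) :
    IsClosed (normContinuitySubmodule 𝕜 l U : Set E) := by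
  have hequi : Equicontinuous fun t (T : E) => (U t - 1) * T :=
    (LipschitzWith.uniformEquicontinuous _ K fun t =>
      (lipschitzWith_smul (U t - 1)).weaken (hU t)).equicontinuous
  exact hequi.isClosed_setOfPred_tendsto continuous_const

theorem mul_mem_normContinuitySubmodule_right {T : E} (hT : T ∈ normContinuitySubmodule 𝕜 l U)
    (R : E) : T * R ∈ normContinuitySubmodule 𝕜 l U :=
  mem_normContinuitySubmodule.2 (by simpa [mul_assoc] using hT.mul_const R)

theorem mul_mem_normContinuitySubmodule_of_twist {V : E} {χ : ι → 𝕜} (hχ : Tendsto χ l (𝓝 1))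
    (htwist : ∀ t, U t * V = χ t • (V * U t)) {T : E}
    (hT : T ∈ normContinuitySubmodule 𝕜 l U) : V * T ∈ normContinuitySubmodule 𝕜 l U := by
  have hsplit : ∀ t, (U t - 1) * (V * T) = χ t • (V * ((U t - 1) * T)) + (χ t - 1) • (V * T) :=
    fun t => by
      rw [sub_mul, ← mul_assoc, htwist]
      simp only [smul_mul_assoc, mul_sub, sub_mul, one_mul, smul_sub, sub_smul, one_smul,
        mul_assoc]
      abel
  have hχ' : Tendsto (fun t => χ t - 1) l (𝓝 0) := by simpa using hχ.sub_const 1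
  rw [mem_normContinuitySubmodule, funext hsplit]
  simpa using (hχ.smul (hT.const_mul V)).add (hχ'.smul tendsto_const_nhds)

end NormContinuity

theorem Submodule.mul_mem_of_dense_span {R A : Type*} [CommSemiring R] [Semiring A] [Algebra R A]
    [TopologicalSpace A] [ContinuousMul A] {J : Submodule R A} (hJ : IsClosed (J : Set A))
    {s : Set A} (hs : Dense (span R s : Set A)) (hsJ : ∀ v ∈ s, ∀ x ∈ J, v * x ∈ J)
    (a : A) {x : A} (hx : x ∈ J) : a * x ∈ J := by
  let p := J.comap (LinearMap.mulRight R x)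
  have hsp : (span R s : Set A) ⊆ p := span_le.2 fun v hv => hsJ v hv x hx
  have hp : IsClosed (p : Set A) := hJ.preimage (continuous_mul_const x)
  exact closure_minimal hsp hp (hs.closure_eq ▸ Set.mem_univ a)

theorem norm_sub_one_le_two_of_mem_unitary {E : Type*} [NormedRing E] [StarRing E] [CStarRing E]
    {u : E} (hu : u ∈ unitary E) : ‖u - 1‖ ≤ 2 := by
  nontriviality E
  calc ‖u - 1‖ ≤ ‖u‖ + ‖(1 : E)‖ := norm_sub_le _ _
    _ = 2 := by rw [CStarRing.norm_of_mem_unitary hu, CStarRing.norm_one]; norm_num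

theorem twisted_mollifier_ideal_trivial_general
    {H : Type*} [NormedAddCommGroup H] [InnerProductSpace ℂ H] [CompleteSpace H]
    {A : Type*} [NormedRing A] [StarRing A] [NormedAlgebra ℂ A]
    (π : A →⋆ₐ[ℂ] (H →L[ℂ] H)) (hπ : Isometry π)
    {G : Type*} (u : G → A)
    (hdense : Dense ((Submodule.span ℂ (Set.range u) : Submodule ℂ A) : Set A))
    (U : ℝ → (H →L[ℂ] H)) (hU : ∀ t, U t ∈ unitary (H →L[ℂ] H))
    (c : G → ℝ)
    (htwist : ∀ (t : ℝ) (g : G),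
      U t * π (u g) = Complex.exp (Complex.I * (c g) * t) • (π (u g) * U t))
    (hsimple : ∀ J : Submodule ℂ A, IsClosed (J : Set A) →
      (∀ a x, x ∈ J → a * x ∈ J) → (∀ a x, x ∈ J → x * a ∈ J) → J = ⊥ ∨ J = ⊤) :
    ∃ J : Submodule ℂ A,
      (J : Set A) = {M : A |
        Tendsto (fun t : ℝ => ‖(U t - 1) * π M‖) (nhds 0) (nhds 0)} ∧
      IsClosed (J : Set A) ∧
      (∀ a x, x ∈ J → a * x ∈ J) ∧ (∀ a x, x ∈ J → x * a ∈ J) ∧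
      ((J : Set A) = {0} ∨ (J : Set A) = Set.univ) := by
  set J := (normContinuitySubmodule ℂ (𝓝 0) U).comap π.toAlgHom.toLinearMap
  have hJ_mem : ∀ x, x ∈ J ↔ π x ∈ normContinuitySubmodule ℂ (𝓝 0) U := fun _ => Iff.rfl
  have hJ_closed : IsClosed (J : Set A) :=
    (isClosed_normContinuitySubmodule (𝕜 := ℂ) (l := 𝓝 0) (K := 2) fun t => by
      exact_mod_cast norm_sub_one_le_two_of_mem_unitary (hU t)).preimage hπ.continuous
  have hJ_right : ∀ a x, x ∈ J → x * a ∈ J := fun a x hx => by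
    simpa [hJ_mem] using mul_mem_normContinuitySubmodule_right ((hJ_mem x).1 hx) (π a)
  have hJ_gen : ∀ v ∈ Set.range u, ∀ x ∈ J, v * x ∈ J := by
    rintro _ ⟨g, rfl⟩ x hx
    have hχ : Tendsto (fun t : ℝ => Complex.exp (Complex.I * c g * t)) (𝓝 0) (𝓝 1) := by
      simpa using ((by fun_prop : Continuous fun t : ℝ => Complex.exp (Complex.I * c g * t))
        |>.tendsto 0)
    simpa [hJ_mem] using
      mul_mem_normContinuitySubmodule_of_twist hχ (fun t => htwist t g) ((hJ_mem x).1 hx)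
  have hJ_left : ∀ a x, x ∈ J → a * x ∈ J := fun a _ hx =>
    Submodule.mul_mem_of_dense_span hJ_closed hdense hJ_gen a hx
  refine ⟨J, ?_, hJ_closed, hJ_left, hJ_right, ?_⟩
  · ext M
    exact tendsto_zero_iff_norm_tendsto_zero
  · exact (hsimple J hJ_closed hJ_left hJ_right).imp (fun h => by simp [h]) (fun h => by simp [h])

/-- Let `𝒜` be a simple C*-algebra represented faithfully (isometrically) on a Hilbert
space `H`, generated (as a closed linear span) by unitaries `u_g`, and let `U(t)` be a
one-parameter unitary group on `H` satisfying the twisted commutation relations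
`U(t) u_g = e^{i c_g t} u_g U(t)`. Then the set
`J = {M ∈ 𝒜 : ‖(U(t) − 1) π(M)‖ → 0 as t → 0}` is a closed two-sided ideal of `𝒜`,
hence `J = {0}` or `J = 𝒜`. -/
theorem twisted_mollifier_ideal_trivial
    {H : Type*} [NormedAddCommGroup H] [InnerProductSpace ℂ H] [CompleteSpace H]
    {A : Type*} [NormedRing A] [StarRing A] [CStarRing A] [NormedAlgebra ℂ A]
    [CompleteSpace A] [StarModule ℂ A]
    (π : A →⋆ₐ[ℂ] (H →L[ℂ] H)) (hπ : Isometry π)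
    {G : Type*} (u : G → A) (hu : ∀ g, u g ∈ unitary A)
    (hdense : Dense ((Submodule.span ℂ (Set.range u) : Submodule ℂ A) : Set A))
    (U : ℝ → (H →L[ℂ] H)) (hU : ∀ t, U t ∈ unitary (H →L[ℂ] H))
    (hU0 : U 0 = 1) (hUgrp : ∀ s t : ℝ, U (s + t) = U s * U t)
    (c : G → ℝ)
    (htwist : ∀ (t : ℝ) (g : G),
      U t * π (u g) = Complex.exp (Complex.I * (c g) * t) • (π (u g) * U t))
    (hsimple : ∀ J : Submodule ℂ A, IsClosed (J : Set A) →
      (∀ a x, x ∈ J → a * x ∈ J) → (∀ a x, x ∈ J → x * a ∈ J) → J = ⊥ ∨ J = ⊤) :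
    ∃ J : Submodule ℂ A,
      (J : Set A) = {M : A |
        Tendsto (fun t : ℝ => ‖(U t - 1) * π M‖) (nhds 0) (nhds 0)} ∧
      IsClosed (J : Set A) ∧
      (∀ a x, x ∈ J → a * x ∈ J) ∧ (∀ a x, x ∈ J → x * a ∈ J) ∧
      ((J : Set A) = {0} ∨ (J : Set A) = Set.univ) :=
  twisted_mollifier_ideal_trivial_general π hπ u hdense U hU c htwist hsimple
end

section
/- Let φ be a (possibly unbounded) graded KMS functional on a C*-algebra 𝒜 with grading γ and time evolution α. Then φ is α-invariant: φ(α_t(B)) = φ(B) for all B ∈ Dom φ and all t ∈ ℝ. -/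
/-!
Taking `a = 1` in the KMS condition, the function `F` on the strip with boundary values
`F t = φ (α t b)` satisfies `F (t + i) = F t`. Extended to `ℂ` with period `i`, it is continuous and
holomorphic off the lines `Im z ∈ ℤ`, hence entire by Morera's theorem. It grows at most
polynomially, and an entire periodic function of polynomial growth is constant: by Cauchy's
estimate its derivative is again periodic, of lower growth, so by induction the derivative is
constant, and periodicity forces that constant to vanish.
-/

namespace Complex

open Set Metric Filter Topology intervalIntegral
open scoped Interval

section Morera

variable {E : Type*} [NormedAddCommGroup E]

lemma intervalIntegrable_vertical_of_continuousOn_rectangle {f : ℂ → E} {z w : ℂ}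
    (hf : ContinuousOn f (Rectangle z w)) {x : ℝ} (hx : x ∈ [[z.re, w.re]]) :
    IntervalIntegrable (fun y : ℝ => f (x + y * I)) MeasureTheory.volume z.im w.im := by
  refine (hf.comp (by fun_prop) fun y hy => ?_).intervalIntegrable
  simpa [Rectangle, mem_reProdIm] using And.intro hx hy

variable [NormedSpace ℂ E]

noncomputable def rectBoundaryIntegral (f : ℂ → E) (z w : ℂ) : E :=
  (∫ x : ℝ in z.re..w.re, f (x + z.im * I)) - (∫ x : ℝ in z.re..w.re, f (x + w.im * I)) +
    I • (∫ y : ℝ in z.im..w.im, f (w.re + y * I)) - I • (∫ y : ℝ in z.im..w.im, f (z.re + y * I))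

lemma isConservativeOn_iff_rectBoundaryIntegral_eq_zero {f : ℂ → E} {U : Set ℂ} :
    IsConservativeOn f U ↔ ∀ z w, Rectangle z w ⊆ U → rectBoundaryIntegral f z w = 0 := by
  simp only [IsConservativeOn, ← add_eq_zero_iff_eq_neg, wedgeIntegral_add_wedgeIntegral_eq,
    rectBoundaryIntegral]

lemma rectBoundaryIntegral_eq_add {f : ℂ → E} {z w : ℂ} {m : ℝ}
    (hf : ContinuousOn f (Rectangle z w)) (hm : m ∈ [[z.im, w.im]]) :
    rectBoundaryIntegral f z w =
      rectBoundaryIntegral f z ⟨w.re, m⟩ + rectBoundaryIntegral f ⟨z.re, m⟩ w := by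
  have hsplit : ∀ x ∈ [[z.re, w.re]], (∫ y : ℝ in z.im..m, f (x + y * I)) +
      ∫ y : ℝ in m..w.im, f (x + y * I) = ∫ y : ℝ in z.im..w.im, f (x + y * I) := fun x hx =>
    have hint := intervalIntegrable_vertical_of_continuousOn_rectangle hf hx
    integral_add_adjacent_intervals (hint.mono_set (uIcc_subset_uIcc_left hm))
      (hint.mono_set (uIcc_subset_uIcc_right hm))
  simp only [rectBoundaryIntegral, ← hsplit _ left_mem_uIcc, ← hsplit _ right_mem_uIcc]
  module

lemma rectBoundaryIntegral_eq_zero_of_notMem_uIoo {f : ℂ → E} {U : Set ℂ} {m : ℝ}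
    (hc : ContinuousOn f U) (hd : DifferentiableOn ℂ f (U \ im ⁻¹' {m})) {z w : ℂ}
    (hzw : Rectangle z w ⊆ U) (hm : m ∉ uIoo z.im w.im) :
    rectBoundaryIntegral f z w = 0 := by
  refine integral_boundary_rect_eq_zero_of_continuousOn_of_differentiableOn f z w (hc.mono hzw)
    (hd.mono fun u hu => ⟨hzw ?_, fun hum => hm (hum ▸ hu.2)⟩)
  exact reProdIm_subset_iff.2 (prod_mono uIoo_subset_uIcc_self uIoo_subset_uIcc_self) hu

/-- Morera: a rectangle crossing the line splits along it into two rectangles whose interiors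
avoid the line, so Cauchy–Goursat applies to each. -/
theorem differentiableOn_of_differentiableOn_diff_horizontal [CompleteSpace E] {f : ℂ → E}
    {U : Set ℂ} (hU : IsOpen U) {m : ℝ} (hc : ContinuousOn f U)
    (hd : DifferentiableOn ℂ f (U \ im ⁻¹' {m})) :
    DifferentiableOn ℂ f U := by
  refine (isConservativeOn_and_continuousOn_iff_isDifferentiableOn hU).1 ⟨?_, hc⟩
  refine isConservativeOn_iff_rectBoundaryIntegral_eq_zero.2 fun z w hzw => ?_
  by_cases hm : m ∈ uIoo z.im w.im
  · have hm' : m ∈ [[z.im, w.im]] := uIoo_subset_uIcc_self hm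
    rw [rectBoundaryIntegral_eq_add (hc.mono hzw) hm',
      rectBoundaryIntegral_eq_zero_of_notMem_uIoo (w := ⟨w.re, m⟩) hc hd
        ((reProdIm_subset_iff.2 (prod_mono subset_rfl (uIcc_subset_uIcc_left hm'))).trans hzw)
        right_notMem_uIoo,
      rectBoundaryIntegral_eq_zero_of_notMem_uIoo (z := ⟨z.re, m⟩) hc hd
        ((reProdIm_subset_iff.2 (prod_mono subset_rfl (uIcc_subset_uIcc_right hm'))).trans hzw)
        left_notMem_uIoo, add_zero]
  · exact rectBoundaryIntegral_eq_zero_of_notMem_uIoo hc hd hzw hm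

end Morera

section Liouville

variable {E : Type*} [NormedAddCommGroup E] [NormedSpace ℂ E]

lemma _root_.Function.Periodic.deriv {f : ℂ → E} {p : ℂ} (h : Function.Periodic f p) :
    Function.Periodic (deriv f) p := fun z => by
  rw [← deriv_comp_add_const, show (fun x => f (x + p)) = f from funext h]

/-- Cauchy's estimate on the circle of radius `1 + ‖w‖` about `w`, which lies in the ball of
radius `2 (1 + ‖w‖)` about `0`. -/
lemma norm_deriv_le_of_norm_le_one_add_norm_pow {f : ℂ → E}
    (hf : Differentiable ℂ f) {c : ℝ} {n : ℕ} (hb : ∀ z, ‖f z‖ ≤ c * (1 + ‖z‖) ^ (n + 1))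
    (w : ℂ) : ‖deriv f w‖ ≤ 2 ^ (n + 1) * c * (1 + ‖w‖) ^ n := by
  have hc : 0 ≤ c := by simpa using (norm_nonneg _).trans (hb 0)
  have hR : 0 < 1 + ‖w‖ := by positivity
  have hsphere : ∀ z ∈ sphere w (1 + ‖w‖), ‖f z‖ ≤ c * (2 * (1 + ‖w‖)) ^ (n + 1) := by
    intro z hz
    have hz' : ‖z‖ ≤ ‖w‖ + (1 + ‖w‖) := by
      simpa [mem_sphere_iff_norm.1 hz] using norm_le_norm_add_norm_sub' z w
    refine (hb z).trans (mul_le_mul_of_nonneg_left (pow_le_pow_left₀ (by positivity) ?_ _) hc)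
    linarith
  calc ‖deriv f w‖ ≤ c * (2 * (1 + ‖w‖)) ^ (n + 1) / (1 + ‖w‖) :=
        norm_deriv_le_of_forall_mem_sphere_norm_le hR hf.diffContOnCl hsphere
    _ = 2 ^ (n + 1) * c * (1 + ‖w‖) ^ n := by
        rw [mul_pow, pow_succ]
        field_simp
        ring

lemma apply_eq_apply_of_periodic_of_deriv_eq_const {f : ℂ → E}
    (hf : Differentiable ℂ f) {p : ℂ} (hp : Function.Periodic f p) (hp₀ : p ≠ 0) {c : E}
    (hc : ∀ z, deriv f z = c) (z w : ℂ) : f z = f w := by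
  have hlin : ∀ u v : ℂ, f u - u • c = f v - v • c :=
    is_const_of_deriv_eq_zero (hf.sub (by fun_prop)) fun u => by
      rw [deriv_fun_sub (hf u) (by fun_prop), hc, deriv_smul_const (by fun_prop)]
      simp
  have hc₀ : c = 0 := by
    have hperiod := hlin p 0
    rw [← zero_add p, hp 0] at hperiod
    simpa [hp₀] using hperiod
  simpa [hc₀] using hlin z w

theorem apply_eq_apply_of_periodic_of_norm_le_one_add_norm_pow [CompleteSpace E] (N : ℕ)
    {f : ℂ → E} (hf : Differentiable ℂ f) {p : ℂ} (hp : Function.Periodic f p) (hp₀ : p ≠ 0)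
    {c : ℝ} (hb : ∀ z, ‖f z‖ ≤ c * (1 + ‖z‖) ^ N) (z w : ℂ) : f z = f w := by
  induction N generalizing f c z w with
  | zero =>
    exact hf.apply_eq_apply_of_bounded (isBounded_iff_forall_norm_le.2 ⟨c, by simpa using hb⟩) z w
  | succ n ih =>
    have hderiv u := ih hf.deriv hp.deriv (norm_deriv_le_of_norm_le_one_add_norm_pow hf hb) u 0
    exact apply_eq_apply_of_periodic_of_deriv_eq_const hf hp hp₀ hderiv z w

end Liouville

section Periodization

variable {X : Type*} {F : ℂ → X}

noncomputable def stripPeriodization (F : ℂ → X) (z : ℂ) : X := F (z.re + Int.fract z.im * I)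

lemma stripPeriodization_periodic : Function.Periodic (stripPeriodization F) I := fun z => by
  simp [stripPeriodization]

lemma stripPeriodization_ofReal (t : ℝ) : stripPeriodization F t = F t := by
  simp [stripPeriodization]

lemma stripPeriodization_eq_of_mem_slab {k : ℤ} {z : ℂ} (h₁ : k ≤ z.im) (h₂ : z.im < k + 1) :
    stripPeriodization F z = F (z - k * I) := by
  have hfract : Int.fract z.im = z.im - k := by
    rw [Int.fract, Int.floor_eq_iff.2 ⟨h₁, h₂⟩]
  rw [stripPeriodization, hfract]
  congr 1
  apply Complex.ext <;> simp

lemma continuous_stripPeriodization [TopologicalSpace X] (hc : ContinuousOn F closedStrip)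
    (hper : ∀ t : ℝ, F (t + I) = F t) : Continuous (stripPeriodization F) := by
  refine ContinuousOn.comp_fract (f := fun (z : ℂ) (s : ℝ) => F (z.re + s * I))
    (hc.comp (by fun_prop) fun p hp => ?_) continuous_im fun z => by simpa using (hper z.re).symm
  simpa [closedStrip] using hp.2

end Periodization

section Strip

variable {E : Type*} [NormedAddCommGroup E] {F : ℂ → E}

lemma norm_le_of_mem_closedStrip (hc : ContinuousOn F closedStrip) {C : ℝ} {N : ℕ}
    (hb : ∀ t s : ℝ, 0 < s → s < 1 → ‖F (t + s * I)‖ ≤ C * (1 + |t|) ^ N) {z : ℂ}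
    (hz : z ∈ closedStrip) : ‖F z‖ ≤ C * (1 + |z.re|) ^ N := by
  have hclosure : closure openStrip = closedStrip := by
    rw [show openStrip = im ⁻¹' Ioo 0 1 from rfl, closure_preimage_im, closure_Ioo zero_ne_one]
    rfl
  refine ContinuousWithinAt.closure_le (hclosure ▸ hz)
    ((hc z hz).mono (fun w hw => ⟨hw.1.le, hw.2.le⟩)).norm
    (by fun_prop : Continuous fun w : ℂ => C * (1 + |w.re|) ^ N).continuousWithinAt fun w hw => ?_
  simpa using hb w.re w.im hw.1 hw.2

variable [NormedSpace ℂ E]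

lemma differentiableAt_stripPeriodization (hd : DifferentiableOn ℂ F openStrip) {k : ℤ} {z : ℂ}
    (h₁ : k < z.im) (h₂ : z.im < k + 1) : DifferentiableAt ℂ (stripPeriodization F) z := by
  have hslab : im ⁻¹' Ioo (k : ℝ) (k + 1) ∈ 𝓝 z :=
    (isOpen_Ioo.preimage continuous_im).mem_nhds ⟨h₁, h₂⟩
  have hstrip : openStrip ∈ 𝓝 (z - k * I) := by
    refine (isOpen_Ioo.preimage continuous_im).mem_nhds (show _ ∧ _ from ?_)
    simp only [sub_im, mul_im, intCast_re, intCast_im, I_re, I_im]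
    constructor <;> linarith
  refine ((hd.differentiableAt hstrip).comp (f := fun w => w - k * I) z
    (by fun_prop)).congr_of_eventuallyEq ?_
  filter_upwards [hslab] with w hw using stripPeriodization_eq_of_mem_slab hw.1.le hw.2

lemma differentiable_stripPeriodization [CompleteSpace E] (hc : ContinuousOn F closedStrip)
    (hd : DifferentiableOn ℂ F openStrip) (hper : ∀ t : ℝ, F (t + I) = F t) :
    Differentiable ℂ (stripPeriodization F) := by
  intro z
  set n := ⌊z.im⌋
  have hU : IsOpen (im ⁻¹' Ioo ((n : ℝ) - 1) (n + 1)) := isOpen_Ioo.preimage continuous_im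
  have hz : z ∈ im ⁻¹' Ioo ((n : ℝ) - 1) (n + 1) :=
    ⟨by linarith [Int.floor_le z.im], Int.lt_floor_add_one z.im⟩
  refine (differentiableOn_of_differentiableOn_diff_horizontal hU (m := n)
    (continuous_stripPeriodization hc hper).continuousOn ?_ _ hz).differentiableAt
    (hU.mem_nhds hz)
  rintro w ⟨⟨hw₁, hw₂⟩, hwn⟩
  rcases lt_or_gt_of_ne hwn with hlt | hgt
  · exact (differentiableAt_stripPeriodization hd (k := n - 1) (by push_cast; linarith)
      (by push_cast; linarith)).differentiableWithinAt
  · exact (differentiableAt_stripPeriodization hd hgt hw₂).differentiableWithinAt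

theorem eq_of_continuousOn_closedStrip_of_periodic [CompleteSpace E]
    (hc : ContinuousOn F closedStrip) (hd : DifferentiableOn ℂ F openStrip)
    (hper : ∀ t : ℝ, F (t + I) = F t) {C : ℝ} {N : ℕ}
    (hb : ∀ t s : ℝ, 0 < s → s < 1 → ‖F (t + s * I)‖ ≤ C * (1 + |t|) ^ N) (t u : ℝ) :
    F t = F u := by
  have hbound : ∀ z, ‖stripPeriodization F z‖ ≤ max C 0 * (1 + ‖z‖) ^ N := fun z =>
    calc ‖stripPeriodization F z‖ ≤ C * (1 + |z.re|) ^ N := by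
          simpa [stripPeriodization] using norm_le_of_mem_closedStrip hc hb
            (z := z.re + Int.fract z.im * I) (by simp [closedStrip, (Int.fract_lt_one _).le])
      _ ≤ max C 0 * (1 + ‖z‖) ^ N := by
          gcongr
          · exact le_max_left C 0
          · exact abs_re_le_norm z
  simpa [stripPeriodization_ofReal] using apply_eq_apply_of_periodic_of_norm_le_one_add_norm_pow N
    (differentiable_stripPeriodization hc hd hper) stripPeriodization_periodic I_ne_zero hbound t u

end Strip

end Complex

theorem gradedKMS_alpha_invariant_general
    {A : Type*} [NormedRing A] [StarRing A] [NormedAlgebra ℂ A]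
    [StarModule ℂ A]
    (γ : A ≃⋆ₐ[ℂ] A)
    (α : ℝ → A ≃⋆ₐ[ℂ] A) (hα₀ : ∀ a, α 0 a = a)
    (D : StarSubalgebra ℂ A)
    (φ : A → ℂ)
    (hKMS : ∀ a ∈ D, ∀ b ∈ D, ∃ F : ℂ → ℂ,
      ContinuousOn F closedStrip ∧ DifferentiableOn ℂ F openStrip ∧
      (∀ t : ℝ, F (t : ℂ) = φ (a * α t b)) ∧
      (∀ t : ℝ, F ((t : ℂ) + Complex.I) = φ (α t b * γ a)) ∧
      (∃ (C : ℝ) (N : ℕ), ∀ t s : ℝ, 0 < s → s < 1 →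
        ‖F ((t : ℂ) + (s : ℂ) * Complex.I)‖ ≤ C * (1 + |t|) ^ N)) :
    ∀ b ∈ D, ∀ t : ℝ, φ (α t b) = φ b := by
  intro b hb t
  obtain ⟨F, hFc, hFd, hF₀, hF₁, C, N, hFb⟩ := hKMS 1 D.one_mem b hb
  have hper : ∀ s : ℝ, F (s + Complex.I) = F s := fun s => by
    rw [hF₁, hF₀, map_one, mul_one, one_mul]
  have hconst := Complex.eq_of_continuousOn_closedStrip_of_periodic hFc hFd hper hFb t 0
  rwa [hF₀, hF₀, hα₀, one_mul, one_mul] at hconst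

/-- A (possibly unbounded) graded KMS functional `φ` on a C*-algebra `𝒜` with grading `γ`
and time evolution `α` is `α`-invariant: `φ(α_t(B)) = φ(B)` for all `B` in the domain. -/
theorem gradedKMS_alpha_invariant
    {A : Type*} [NormedRing A] [StarRing A] [CStarRing A] [NormedAlgebra ℂ A]
    [CompleteSpace A] [StarModule ℂ A]
    (γ : A ≃⋆ₐ[ℂ] A) (hγ₂ : ∀ a, γ (γ a) = a)
    (α : ℝ → A ≃⋆ₐ[ℂ] A) (hα₀ : ∀ a, α 0 a = a)
    (hαgrp : ∀ s t : ℝ, ∀ a, α s (α t a) = α (s + t) a)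
    (hαcont : ∀ a : A, Continuous fun t : ℝ => α t a)
    (hαγ : ∀ t : ℝ, ∀ a, α t (γ a) = γ (α t a))
    (D : StarSubalgebra ℂ A) (hdense : Dense (D : Set A))
    (hDγ : ∀ a ∈ D, γ a ∈ D) (hDα : ∀ t : ℝ, ∀ a ∈ D, α t a ∈ D)
    (φ : A → ℂ)
    (hKMS : ∀ a ∈ D, ∀ b ∈ D, ∃ F : ℂ → ℂ,
      ContinuousOn F closedStrip ∧ DifferentiableOn ℂ F openStrip ∧
      (∀ t : ℝ, F (t : ℂ) = φ (a * α t b)) ∧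
      (∀ t : ℝ, F ((t : ℂ) + Complex.I) = φ (α t b * γ a)) ∧
      (∃ (C : ℝ) (N : ℕ), ∀ t s : ℝ, 0 < s → s < 1 →
        ‖F ((t : ℂ) + (s : ℂ) * Complex.I)‖ ≤ C * (1 + |t|) ^ N)) :
    ∀ b ∈ D, ∀ t : ℝ, φ (α t b) = φ b :=
  gradedKMS_alpha_invariant_general γ α hα₀ D φ hKMS
end
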